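/- Let (W,S) be a Coxeter system with finite index set B, let p : Option B → ℝ≥0 be step weights satisfying p (some i) ≤ p none for every i : B, let w ∈ W and let s = s i be a simple reflection with ℓ(w * s) > ℓ(w). Then for every n : ℕ, Wt n (w * s) ≤ Wt n w. -/

import Mathlib

/-!
Condition on the first step: `Wt (n+1) v = ∑ₓ p x * Wt n (x * v)`. Compare the terms for
`v = w * s` and `v = w`. If `s j * w ≠ w * s`, the lifting property of Coxeter groups gives
`ℓ (s j * w) < ℓ (s j * w * s)`, so induction applies to `u = s j * w`. At most one `j` has
`s j * w = w * s`, since distinct indices give distinct simple reflections. This step swaps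
`w` and `w * s`, and the lazy step makes up for it because `p (some j) ≤ p none`.

The lifting property follows from the exchange condition, proved with Tits' sign cocycle on
`W × ZMod 2`. The simple reflections are distinct because the geometric representation tells
them apart.
-/

open scoped NNReal

/-- The total weight of lazy walks of length `n` (each step an element of `Option B`,
interpreted as `1` for `none` and the simple reflection `cs.simple i` for `some i`,
with step weights `p`) whose steps multiply, in order, to `w`. -/
noncomputable def lazyWalkWeight {B W : Type*} [Fintype B] [DecidableEq W] [Group W]
    {M : CoxeterMatrix B} (cs : CoxeterSystem M W) (p : Option B → ℝ≥0)
    (n : ℕ) (w : W) : ℝ≥0 :=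
  ∑ f ∈ Finset.univ.filter (fun f : Fin n → Option B =>
      (List.ofFn fun j => ((f j).elim 1 cs.simple)).prod = w),
    ∏ j : Fin n, p (f j)

open Real Polynomial.Chebyshev

lemma Polynomial.Chebyshev.S_eval_two_mul_cos_two_pi_div {m : ℕ} (hm : 3 ≤ m) :
    (S ℝ (m - 1)).eval (2 * cos (2 * π / m)) = 0 ∧
      (S ℝ m).eval (2 * cos (2 * π / m)) = 1 := by
  have hm0 : (m : ℝ) ≠ 0 := by positivity
  have hsin : sin (2 * π / m) ≠ 0 := by
    refine (sin_pos_of_pos_of_lt_pi (by positivity) ?_).ne'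
    rw [div_lt_iff₀ (by positivity)]
    linarith [mul_le_mul_of_nonneg_left (by exact_mod_cast hm : (3 : ℝ) ≤ m) pi_pos.le, pi_pos]
  have h₁ := S_two_mul_real_cos (2 * π / m) (m - 1)
  have h₂ := S_two_mul_real_cos (2 * π / m) m
  rw [show ((((m : ℤ) - 1 : ℤ) : ℝ) + 1) * (2 * π / m) = 2 * π by
      push_cast; field_simp; ring,
    sin_two_pi] at h₁
  rw [show (((m : ℤ) : ℝ) + 1) * (2 * π / m) = 2 * π / m + 2 * π by
      push_cast; field_simp; ring,
    sin_add_two_pi] at h₂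
  exact ⟨(mul_eq_zero.mp h₁).resolve_right hsin,
    mul_right_cancel₀ hsin (h₂.trans (one_mul _).symm)⟩

namespace Module

variable {V : Type*} [AddCommGroup V] [Module ℝ V] {x y : V} {f g : Dual ℝ V}

lemma reflection_mul_reflection_pow_apply_self_eq_self (hf : f x = 2) (hg : g y = 2) {m : ℕ}
    (hm : 2 ≤ m) (hfy : f y = -2 * cos (π / m)) (hgx : g x = -2 * cos (π / m)) :
    ((reflection hf * reflection hg) ^ m) x = x := by
  have ht : f y * g x - 2 = 2 * cos (2 * π / m) := by
    rw [hfy, hgx, mul_div_assoc, cos_two_mul]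
    ring
  rw [reflection_mul_reflection_pow_apply_self hf hg m _ ht.symm]
  obtain rfl | hm3 := hm.eq_or_lt
  · norm_num [hgx, S_two, S_one]
  · obtain ⟨h₁, h₂⟩ := S_eval_two_mul_cos_two_pi_div hm3
    simp [h₁, h₂]

lemma reflection_mul_reflection_pow_eq_one (hf : f x = 2) (hg : g y = 2) {m : ℕ}
    (hm : 2 ≤ m) (hfy : f y = -2 * cos (π / m)) (hgx : g x = -2 * cos (π / m)) :
    (reflection hf * reflection hg) ^ m = 1 := by
  set P := (reflection hf * reflection hg) ^ m
  have hPx : P x = x := reflection_mul_reflection_pow_apply_self_eq_self hf hg hm hfy hgx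
  have hPy : P y = y := by
    have hP : P = ((reflection hg * reflection hf) ^ m)⁻¹ := by
      rw [← inv_pow, mul_inv_rev, reflection_inv, reflection_inv]
    rw [hP, LinearEquiv.coe_inv, LinearEquiv.symm_apply_eq,
      reflection_mul_reflection_pow_apply_self_eq_self hg hf hm hgx hfy]
  have hfix (z : V) (hfz : f z = 0) (hgz : g z = 0) : P z = z := by
    have : (reflection hf * reflection hg) z = z := by simp [reflection_apply, hfz, hgz]
    rw [LinearEquiv.coe_pow]
    exact Function.iterate_fixed this m
  have hsin : sin (π / m) ≠ 0 :=
    (sin_pos_of_pos_of_lt_pi (by positivity) (div_lt_self pi_pos (by exact_mod_cast hm))).ne'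
  have hD : 4 - f y * g x ≠ 0 := by
    rw [hfy, hgx]
    intro h
    apply pow_ne_zero 2 hsin
    linear_combination h / 4 + sin_sq_add_cos_sq (π / m)
  ext z
  -- split `z` along `x`, `y` and the common kernel of `f` and `g`
  set α := (2 * f z - f y * g z) / (4 - f y * g x)
  set β := (2 * g z - g x * f z) / (4 - f y * g x)
  have hz : z = (z - α • x - β • y) + α • x + β • y := by abel
  have h₀ : P (z - α • x - β • y) = z - α • x - β • y := by
    apply hfix <;> simp only [map_sub, map_smul, smul_eq_mul, hf, hg, α, β] <;> field_simp <;>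
      ring
  rw [hz, map_add, map_add, h₀, map_smul, map_smul, hPx, hPy]
  rfl

end Module

namespace CoxeterMatrix

variable {B : Type*} [Fintype B] [DecidableEq B] (M : CoxeterMatrix B)

/-- The functional `2 B(α_a, -)` of the geometric representation, with
`B(α_a, α_c) = -cos (π / M a c)`. For `M a c = 0` (no relation) the junk value `π / 0 = 0`
gives `-1`, the usual choice. -/
noncomputable def geometricDual (a : B) : Module.Dual ℝ (B → ℝ) :=
  ∑ c, (-2 * cos (π / M a c)) • LinearMap.proj c

lemma geometricDual_single (a b : B) :
    M.geometricDual a (Pi.single b 1) = -2 * cos (π / M a b) := by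
  simp [geometricDual, Pi.single_apply]

lemma geometricDual_single_self (a : B) : M.geometricDual a (Pi.single a 1) = 2 := by
  simp [geometricDual_single]

noncomputable def geometricReflection (a : B) : (B → ℝ) ≃ₗ[ℝ] (B → ℝ) :=
  Module.reflection (M.geometricDual_single_self a)

lemma isLiftable_geometricReflection : M.IsLiftable M.geometricReflection := by
  intro a b
  obtain rfl | hab := eq_or_ne a b
  · rw [M.diagonal, pow_one]
    exact LinearEquiv.ext (Module.involutive_reflection _)
  obtain hm | hm := Nat.eq_zero_or_pos (M a b)
  · rw [hm, pow_zero]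
  · exact Module.reflection_mul_reflection_pow_eq_one _ _
      (by have := M.off_diagonal a b hab; omega)
      (M.geometricDual_single a b) (by rw [geometricDual_single, M.symmetric])

end CoxeterMatrix

lemma mul_mul_eq_iff_eq_mul_mul {G : Type*} [Group G] {g h x y : G} (hgh : g * h = 1) :
    g * x * h = y ↔ x = h * y * g := by
  rw [← inv_eq_of_mul_eq_one_right hgh]
  constructor <;> rintro rfl <;> group

namespace CoxeterSystem

variable {B W : Type*} [Group W] {M : CoxeterMatrix B} (cs : CoxeterSystem M W)

theorem simple_injective [Finite B] : Function.Injective cs.simple := by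
  classical
  have := Fintype.ofFinite B
  intro a b hab
  by_contra hne
  have h := congrArg
    (fun w => cs.lift ⟨_, M.isLiftable_geometricReflection⟩ w (Pi.single a 1) a) hab
  norm_num [lift_apply_simple, CoxeterMatrix.geometricReflection, Module.reflection_apply, hne] at h

section TitsCocycle

variable [DecidableEq W]

/-- Tits' cocycle: `s i` conjugates the reflection `t` and flips the sign when `t = s i`, so that
a word `ω` flips the sign of `t` once for each occurrence of `t` in `cs.rightInvSeq ω`. -/
def titsAction (i : B) : Function.End (W × ZMod 2) :=
  fun q => (cs.simple i * q.1 * cs.simple i, q.2 + if q.1 = cs.simple i then 1 else 0)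

lemma titsAction_mul_titsAction_pow_apply (a b : B) (n : ℕ) (q : W × ZMod 2) :
    ((cs.titsAction a * cs.titsAction b) ^ n) q =
      ((cs.simple a * cs.simple b) ^ n * q.1 * ((cs.simple a * cs.simple b) ^ n)⁻¹,
        q.2 + ∑ k ∈ Finset.range (2 * n),
          if q.1 = (cs.simple b * cs.simple a) ^ k * cs.simple b then 1 else 0) := by
  induction n generalizing q with
  | zero =>
    simp only [pow_zero, one_mul, inv_one, mul_one, mul_zero, Finset.range_zero, Finset.sum_empty,
      add_zero]
    rfl
  | succ n ih =>
    obtain ⟨t, ε⟩ := q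
    have hgh : cs.simple a * cs.simple b * (cs.simple b * cs.simple a) = 1 := by
      simp [mul_assoc]
    have hstep : (cs.titsAction a * cs.titsAction b) (t, ε) =
        (cs.simple a * cs.simple b * t * (cs.simple b * cs.simple a),
          ε + ((if t = (cs.simple b * cs.simple a) ^ 0 * cs.simple b then 1 else 0) +
            if t = (cs.simple b * cs.simple a) ^ 1 * cs.simple b then 1 else 0)) := by
      have hb : cs.simple b * t * cs.simple b = cs.simple a ↔
          t = cs.simple b * cs.simple a * cs.simple b :=
        mul_mul_eq_iff_eq_mul_mul (cs.simple_mul_simple_self b)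
      show (cs.simple a * (cs.simple b * t * cs.simple b) * cs.simple a,
        ε + (if t = cs.simple b then 1 else 0) +
          if cs.simple b * t * cs.simple b = cs.simple a then 1 else 0) = _
      simp only [hb]
      simp only [add_assoc, mul_assoc, pow_zero, one_mul, pow_one]
    have hconj (k : ℕ) : cs.simple a * cs.simple b * t * (cs.simple b * cs.simple a) =
        (cs.simple b * cs.simple a) ^ k * cs.simple b ↔
        t = (cs.simple b * cs.simple a) ^ (k + 1 + 1) * cs.simple b := by
      rw [mul_mul_eq_iff_eq_mul_mul hgh, pow_succ, pow_succ']
      simp only [mul_assoc]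
    rw [pow_succ]
    show ((cs.titsAction a * cs.titsAction b) ^ n) ((cs.titsAction a * cs.titsAction b) (t, ε)) = _
    rw [hstep, ih]
    refine Prod.ext ?_ ?_
    · rw [← inv_eq_of_mul_eq_one_right hgh]
      generalize cs.simple a * cs.simple b = g
      group
    · simp only [hconj]
      rw [show 2 * (n + 1) = 2 * n + 1 + 1 by ring, Finset.sum_range_succ', Finset.sum_range_succ']
      ring

lemma isLiftable_titsAction : M.IsLiftable cs.titsAction := by
  intro a b
  funext ⟨t, ε⟩
  rw [titsAction_mul_titsAction_pow_apply, simple_mul_simple_pow]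
  set f : ℕ → ZMod 2 := fun k =>
    if t = (cs.simple b * cs.simple a) ^ k * cs.simple b then 1 else 0
  have hf (k : ℕ) : f (M a b + k) = f k := by
    simp only [f, pow_add, M.symmetric a b, simple_mul_simple_pow, one_mul]
  simp only [one_mul, inv_one, mul_one, two_mul, Finset.sum_range_add, hf,
    CharTwo.add_self_eq_zero, add_zero]
  rfl

noncomputable def titsHom : W →* Function.End (W × ZMod 2) :=
  cs.lift ⟨cs.titsAction, cs.isLiftable_titsAction⟩

lemma titsHom_wordProd_apply (ω : List B) (q : W × ZMod 2) :
    cs.titsHom (cs.wordProd ω) q =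
      (cs.wordProd ω * q.1 * (cs.wordProd ω)⁻¹,
        q.2 + ((cs.rightInvSeq ω).count q.1 : ZMod 2)) := by
  induction ω generalizing q with
  | nil =>
    simp only [wordProd_nil, map_one, one_mul, inv_one, mul_one, rightInvSeq_nil, List.count_nil,
      Nat.cast_zero, add_zero]
    rfl
  | cons i ω ih =>
    obtain ⟨t, ε⟩ := q
    rw [wordProd_cons, map_mul]
    show cs.titsHom (cs.simple i) (cs.titsHom (cs.wordProd ω) (t, ε)) = _
    rw [ih, titsHom, lift_apply_simple]
    have hconj : cs.wordProd ω * t * (cs.wordProd ω)⁻¹ = cs.simple i ↔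
        (cs.wordProd ω)⁻¹ * cs.simple i * cs.wordProd ω = t := by
      rw [mul_mul_eq_iff_eq_mul_mul (mul_inv_cancel _), eq_comm]
    simp only [titsAction, rightInvSeq, List.count_cons, beq_iff_eq, hconj]
    refine Prod.ext (by simp [mul_assoc]) ?_
    push_cast
    ring

lemma cast_count_rightInvSeq_eq {ω ω' : List B} (h : cs.wordProd ω = cs.wordProd ω') (t : W) :
    ((cs.rightInvSeq ω).count t : ZMod 2) = (cs.rightInvSeq ω').count t := by
  simpa [titsHom_wordProd_apply] using congrArg (fun w => (cs.titsHom w (t, 0)).2) h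

end TitsCocycle

theorem simple_mem_rightInvSeq {ω : List B} {i : B} (hi : cs.IsRightDescent (cs.wordProd ω) i) :
    cs.simple i ∈ cs.rightInvSeq ω := by
  classical
  obtain ⟨τ, hτ, hτω⟩ := cs.exists_isReduced (cs.wordProd ω * cs.simple i)
  have hπ : cs.wordProd (τ.concat i) = cs.wordProd ω := by
    rw [wordProd_concat, ← hτω, simple_mul_simple_cancel_right]
  have hred : cs.IsReduced (τ.concat i) := by
    have := cs.length_mul_simple (cs.wordProd ω) i
    unfold IsRightDescent at hi
    unfold IsReduced at hτ ⊢
    rw [hπ, List.length_concat, ← hτ, ← hτω]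
    omega
  have hcount : (cs.rightInvSeq (τ.concat i)).count (cs.simple i) = 1 :=
    List.count_eq_one_of_mem hred.nodup_rightInvSeq (by rw [rightInvSeq_concat]; simp)
  by_contra hmem
  have := cs.cast_count_rightInvSeq_eq hπ.symm (cs.simple i)
  rw [List.count_eq_zero_of_not_mem hmem, hcount] at this
  exact zero_ne_one (α := ZMod 2) (by exact_mod_cast this)

theorem exists_wordProd_eraseIdx_eq_mul_simple {ω : List B} {i : B}
    (hi : cs.IsRightDescent (cs.wordProd ω) i) :
    ∃ j < ω.length, cs.wordProd (ω.eraseIdx j) = cs.wordProd ω * cs.simple i := by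
  obtain ⟨j, hj, hget⟩ := List.getElem_of_mem (cs.simple_mem_rightInvSeq hi)
  refine ⟨j, by simpa using hj, ?_⟩
  rw [← wordProd_mul_getD_rightInvSeq, List.getD_eq_getElem _ _ hj, hget]

theorem simple_mul_eq_mul_simple {u : W} {i j : B} (hu : cs.length u < cs.length (u * cs.simple i))
    (hju : cs.length (cs.simple j * u * cs.simple i) < cs.length (cs.simple j * u)) :
    cs.simple j * u = u * cs.simple i := by
  obtain ⟨ω, hω, rfl⟩ := cs.exists_isReduced u
  rw [← wordProd_cons] at hju ⊢
  obtain ⟨_ | k, hk, herase⟩ := cs.exists_wordProd_eraseIdx_eq_mul_simple hju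
  · rw [List.eraseIdx_cons_zero] at herase
    rw [herase, simple_mul_simple_cancel_right]
  · rw [List.eraseIdx_cons_succ, wordProd_cons, wordProd_cons, mul_assoc, mul_right_inj] at herase
    have := cs.length_wordProd_le (ω.eraseIdx k)
    rw [herase, List.length_eraseIdx_of_lt (by simpa using hk), ← hω.eq] at this
    omega

lemma inv_option_elim_simple (x : Option B) : (x.elim 1 cs.simple)⁻¹ = x.elim 1 cs.simple := by
  cases x <;> simp [inv_simple]

end CoxeterSystem

section LazyWalk

variable {B W : Type*} [Fintype B] [DecidableEq W] [Group W] {M : CoxeterMatrix B}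
  (cs : CoxeterSystem M W) (p : Option B → ℝ≥0)

lemma lazyWalkWeight_zero (w : W) : lazyWalkWeight cs p 0 w = if w = 1 then 1 else 0 := by
  simp only [lazyWalkWeight, Finset.univ_unique, Finset.prod_of_isEmpty, List.ofFn_zero,
    List.prod_nil, Finset.sum_filter, Finset.sum_singleton, eq_comm]

lemma lazyWalkWeight_succ (n : ℕ) (w : W) :
    lazyWalkWeight cs p (n + 1) w =
      ∑ x : Option B, p x * lazyWalkWeight cs p n (x.elim 1 cs.simple * w) := by
  simp only [lazyWalkWeight, Finset.sum_filter, Finset.mul_sum]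
  rw [← (Fin.consEquiv fun _ => Option B).sum_comp, Fintype.sum_prod_type]
  refine Fintype.sum_congr _ _ fun x => Fintype.sum_congr _ _ fun f => ?_
  simp only [Fin.consEquiv_apply, List.ofFn_succ, Fin.cons_zero, Fin.cons_succ, List.prod_cons,
    Fin.prod_univ_succ, mul_ite, mul_zero, ← eq_inv_mul_iff_mul_eq, cs.inv_option_elim_simple]

lemma lazyWalkWeight_succ_mul_simple_le (hp : ∀ i : B, p (some i) ≤ p none) {w : W} {i : B}
    (h : cs.length w < cs.length (w * cs.simple i)) {n : ℕ}
    (ih : ∀ u : W, cs.length u < cs.length (u * cs.simple i) →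
      lazyWalkWeight cs p n (u * cs.simple i) ≤ lazyWalkWeight cs p n u) :
    lazyWalkWeight cs p (n + 1) (w * cs.simple i) ≤ lazyWalkWeight cs p (n + 1) w := by
  have hstep (j : B) (hj : cs.simple j * w ≠ w * cs.simple i) :
      lazyWalkWeight cs p n (cs.simple j * (w * cs.simple i)) ≤
        lazyWalkWeight cs p n (cs.simple j * w) := by
    rw [← mul_assoc]
    exact ih _ ((cs.length_mul_simple_ne _ i).symm.lt_or_gt.resolve_right
      fun hlt => hj (cs.simple_mul_eq_mul_simple h hlt))
  simp only [lazyWalkWeight_succ, Fintype.sum_option, Option.elim_none, Option.elim_some, one_mul]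
  by_cases hT : ∃ j, cs.simple j * w = w * cs.simple i
  · classical
    obtain ⟨j, hj⟩ := hT
    rw [← Finset.add_sum_erase _ _ (Finset.mem_univ j),
      ← Finset.add_sum_erase _ _ (Finset.mem_univ j),
      ← mul_assoc, hj, cs.simple_mul_simple_cancel_right]
    have hrest := Finset.sum_le_sum fun k (hk : k ∈ Finset.univ.erase j) =>
      mul_le_mul_right (hstep k fun hk' => Finset.ne_of_mem_erase hk
        (cs.simple_injective (mul_right_cancel (hk'.trans hj.symm)))) (p (some k))
    calc _ = (p (some j) * lazyWalkWeight cs p n w +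
            p none * lazyWalkWeight cs p n (w * cs.simple i)) + _ := by ring
      _ ≤ (p (some j) * lazyWalkWeight cs p n (w * cs.simple i) +
            p none * lazyWalkWeight cs p n w) + _ :=
          add_le_add (mul_add_mul_le_mul_add_mul (hp j) (ih w h)) hrest
      _ = _ := by ring
  · exact add_le_add (mul_le_mul_right (ih w h) _)
      (Finset.sum_le_sum fun j _ => mul_le_mul_right (hstep j fun hj => hT ⟨j, hj⟩) _)

end LazyWalk

/-- For a lazy random walk on a Coxeter group with step weights `p` in which the
identity step is at least as likely as any generator, if `ℓ(w * s) > ℓ(w)` then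
after any number of steps the walk is at least as likely to be at `w` as at `w * s`. -/
theorem lazyWalkWeight_mul_simple_le {B W : Type*} [Fintype B] [DecidableEq W]
    [Group W] {M : CoxeterMatrix B} (cs : CoxeterSystem M W) (p : Option B → ℝ≥0)
    (hp : ∀ i : B, p (some i) ≤ p none) (w : W) (i : B)
    (h : cs.length w < cs.length (w * cs.simple i)) (n : ℕ) :
    lazyWalkWeight cs p n (w * cs.simple i) ≤ lazyWalkWeight cs p n w := by
  induction n generalizing w with
  | zero =>
    have hne : w * cs.simple i ≠ 1 := by
      rintro h1
      rw [h1, cs.length_one] at h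
      omega
    simp [lazyWalkWeight_zero, hne]
  | succ n ih => exact lazyWalkWeight_succ_mul_simple_le cs p hp h ih
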